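/- arXiv:2511.16778 — 10 statements merged into one kernel-verified Lean document; each statement's English description precedes it below -/
import Mathlib

section
/- For every natural number N ≥ 1 and every x : Fin N → ℝ, the function β ↦ RSM_β(x) − β * log N tends to the mean (1/N) * ∑_{l=1}^N x_l as β tends to +∞; that is, Tendsto (fun β => β * log (∑_{l=1}^N exp (x_l / β)) − β * log N) atTop (nhds ((1/N) * ∑_{l=1}^N x_l)). -/
/-!
Substituting `t = 1/β`, the shifted RealSoftMax becomes the difference quotient
`(f t - f 0) / t` of `f t = log (∑ l, exp (x l * t))`, whose value at `0` is `log N`.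
As `β → +∞` it therefore tends to `f' 0`, which is the mean of the `x l`.
-/

open Real Filter Topology

theorem HasDerivAt.tendsto_mul_sub_inv_atTop {f : ℝ → ℝ} {f' : ℝ} (hf : HasDerivAt f f' 0) :
    Tendsto (fun β => β * (f β⁻¹ - f 0)) atTop (𝓝 f') := by
  have hinv : Tendsto (fun β : ℝ => β⁻¹) atTop (𝓝[≠] 0) :=
    tendsto_inv_atTop_nhdsGT_zero.mono_right (nhdsWithin_mono _ fun _ h => ne_of_gt h)
  convert (hasDerivAt_iff_tendsto_slope.mp hf).comp hinv using 2 with β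
  simp [slope_def_field, div_eq_mul_inv, mul_comm]

theorem hasDerivAt_log_sum_exp_mul_zero {ι : Type*} [Fintype ι] [Nonempty ι] (x : ι → ℝ) :
    HasDerivAt (fun t => log (∑ i, exp (x i * t))) ((∑ i, x i) / Fintype.card ι) 0 := by
  have hsum : HasDerivAt (fun t => ∑ i, exp (x i * t)) (∑ i, x i) 0 := by
    simpa using HasDerivAt.fun_sum (u := Finset.univ) fun i _ =>
      ((hasDerivAt_id (0 : ℝ)).const_mul (x i)).exp
  have hsum0 : ∑ i, exp (x i * 0) = Fintype.card ι := by simp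
  simpa [hsum0] using hsum.log (by rw [hsum0]; positivity)

/-- For `β > 0` and `x : Fin N → ℝ` with `N ≥ 1`, the shifted RealSoftMax
`RSM_β(x) - β * log N` tends to the mean `(1/N) * ∑ l, x l` as `β → +∞`. -/
theorem rsm_tendsto_mean (N : ℕ) (hN : 1 ≤ N) (x : Fin N → ℝ) :
    Filter.Tendsto
      (fun β : ℝ => β * Real.log (∑ l, Real.exp (x l / β)) - β * Real.log N)
      Filter.atTop
      (nhds ((1 / (N : ℝ)) * ∑ l, x l)) := by
  have : NeZero N := ⟨by omega⟩
  have h := (hasDerivAt_log_sum_exp_mul_zero x).tendsto_mul_sub_inv_atTop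
  simp only [mul_zero, exp_zero, Finset.sum_const, Finset.card_univ, Fintype.card_fin,
    nsmul_eq_mul, mul_one] at h
  rw [one_div_mul_eq_div]
  simpa only [mul_sub, div_eq_mul_inv] using h
end

section
/- For every natural number N ≥ 1 and every x : Fin N → ℝ, the function β ↦ RSM_β(x) − β * log N is nonincreasing on (0, ∞), and for every β > 0 its value lies between the mean (1/N) * ∑_{l=1}^N x_l and the maximum max_{l} x_l; hence the shifted RealSoftMax interpolates monotonically between the mean and the maximum. -/
/-! Subtracting `β log N` turns the RealSoftMax into `β log (mean of exp (x l / β))`, the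
logarithm of a power mean of the numbers `exp (x l)` with exponent `1 / β`. Power means increase
with the exponent, which is the monotonicity; Jensen's inequality for `exp` gives the lower bound
by the arithmetic mean, and bounding every `x l` by the maximum gives the upper bound. -/

open Real Finset Set

noncomputable def weightedRealSoftMax {ι : Type*} (s : Finset ι) (w x : ι → ℝ) (β : ℝ) : ℝ :=
  β * log (∑ i ∈ s, w i * exp (x i / β))

namespace weightedRealSoftMax

variable {ι : Type*} {s : Finset ι} {w : ι → ℝ} (x : ι → ℝ)

theorem sum_pos (hw₀ : ∀ i ∈ s, 0 ≤ w i) (hw₁ : ∑ i ∈ s, w i = 1) (β : ℝ) :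
    0 < ∑ i ∈ s, w i * exp (x i / β) := by
  obtain ⟨i, hi, hwi⟩ := exists_lt_of_sum_lt (s := s) (f := fun _ => (0 : ℝ)) (g := w) (by simp [hw₁])
  exact Finset.sum_pos' (fun j hj => mul_nonneg (hw₀ j hj) (exp_pos _).le)
    ⟨i, hi, mul_pos hwi (exp_pos _)⟩

theorem weightedMean_le (hw₀ : ∀ i ∈ s, 0 ≤ w i) (hw₁ : ∑ i ∈ s, w i = 1) {β : ℝ}
    (hβ : 0 < β) : ∑ i ∈ s, w i * x i ≤ weightedRealSoftMax s w x β := by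
  have jensen : exp (∑ i ∈ s, w i * (x i / β)) ≤ ∑ i ∈ s, w i * exp (x i / β) := by
    simpa only [smul_eq_mul] using convexOn_exp.map_sum_le hw₀ hw₁ (by simp)
  have hmean : ∑ i ∈ s, w i * (x i / β) = (∑ i ∈ s, w i * x i) / β := by
    rw [Finset.sum_div]
    exact Finset.sum_congr rfl fun i _ => (mul_div_assoc _ _ _).symm
  rw [hmean, ← le_log_iff_exp_le (sum_pos x hw₀ hw₁ β), div_le_iff₀' hβ] at jensen
  exact jensen

theorem le_of_forall_le (hw₀ : ∀ i ∈ s, 0 ≤ w i) (hw₁ : ∑ i ∈ s, w i = 1) {β : ℝ}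
    (hβ : 0 < β) {M : ℝ} (hM : ∀ i ∈ s, x i ≤ M) : weightedRealSoftMax s w x β ≤ M := by
  have hsum : ∑ i ∈ s, w i * exp (x i / β) ≤ exp (M / β) :=
    calc ∑ i ∈ s, w i * exp (x i / β) ≤ ∑ i ∈ s, w i * exp (M / β) := by
          gcongr with i hi
          · exact hw₀ i hi
          · exact hM i hi
      _ = exp (M / β) := by rw [← Finset.sum_mul, hw₁, one_mul]
  rw [weightedRealSoftMax, ← le_div_iff₀' hβ, log_le_iff_le_exp (sum_pos x hw₀ hw₁ β)]
  exact hsum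

theorem antitoneOn (hw₀ : ∀ i ∈ s, 0 ≤ w i) (hw₁ : ∑ i ∈ s, w i = 1) :
    AntitoneOn (weightedRealSoftMax s w x) (Ioi 0) := by
  intro a ha b hb hab
  have ha : 0 < a := ha
  have hb : 0 < b := hb
  -- Jensen for the convex power `t ↦ t ^ (b / a)` applied to the numbers `exp (x i / b)`
  have jensen : (∑ i ∈ s, w i * exp (x i / b)) ^ (b / a) ≤ ∑ i ∈ s, w i * exp (x i / a) := by
    have hpow : ∀ i, exp (x i / b) ^ (b / a) = exp (x i / a) := fun i => by
      rw [← exp_mul]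
      congr 1
      field_simp
    simpa only [smul_eq_mul, hpow] using
      (convexOn_rpow ((one_le_div ha).mpr hab)).map_sum_le hw₀ hw₁
        (fun i _ => (exp_pos (x i / b)).le)
  have hlog := log_le_log (rpow_pos_of_pos (sum_pos x hw₀ hw₁ b) _) jensen
  rw [log_rpow (sum_pos x hw₀ hw₁ b), div_mul_eq_mul_div, div_le_iff₀ ha] at hlog
  simpa only [weightedRealSoftMax, mul_comm a] using hlog

end weightedRealSoftMax

theorem sub_mul_log_card_eq_weightedRealSoftMax {N : ℕ} (hN : 1 ≤ N) (x : Fin N → ℝ) (β : ℝ) :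
    β * log (∑ l, exp (x l / β)) - β * log N
      = weightedRealSoftMax univ (fun _ => 1 / (N : ℝ)) x β := by
  have hNpos : (0 : ℝ) < N := by exact_mod_cast hN
  have hsum : 0 < ∑ l : Fin N, exp (x l / β) :=
    Finset.sum_pos (fun l _ => exp_pos _) (univ_nonempty_iff.mpr ⟨⟨0, hN⟩⟩)
  rw [weightedRealSoftMax, ← Finset.mul_sum, log_mul (by positivity) hsum.ne', one_div,
    log_inv]
  ring

/-- The shifted RealSoftMax `β ↦ RSM_β(x) - β * log N` is nonincreasing on `(0, ∞)`
and, for every `β > 0`, its value lies between the mean `(1/N) * ∑ l, x l` and the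
maximum `max_l x_l`: it interpolates monotonically between the mean and the maximum. -/
theorem rsm_shifted_antitone_and_bounds (N : ℕ) (hN : 1 ≤ N) (x : Fin N → ℝ) :
    AntitoneOn (fun β : ℝ => β * Real.log (∑ l, Real.exp (x l / β)) - β * Real.log N)
        (Set.Ioi (0 : ℝ)) ∧
      ∀ β : ℝ, 0 < β →
        (1 / (N : ℝ)) * ∑ l, x l
            ≤ β * Real.log (∑ l, Real.exp (x l / β)) - β * Real.log N ∧
          β * Real.log (∑ l, Real.exp (x l / β)) - β * Real.log N
            ≤ Finset.univ.sup' (Finset.univ_nonempty_iff.mpr ⟨⟨0, hN⟩⟩) x := by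
  have hw₀ : ∀ l ∈ (univ : Finset (Fin N)), 0 ≤ 1 / (N : ℝ) := fun _ _ => by positivity
  have hw₁ : ∑ _l : Fin N, 1 / (N : ℝ) = 1 := by
    rw [sum_const, card_univ, Fintype.card_fin, nsmul_eq_mul]
    exact mul_one_div_cancel (by exact_mod_cast (by omega : N ≠ 0))
  simp only [sub_mul_log_card_eq_weightedRealSoftMax hN x]
  refine ⟨weightedRealSoftMax.antitoneOn x hw₀ hw₁, fun β hβ => ⟨?_, ?_⟩⟩
  · simpa only [Finset.mul_sum] using weightedRealSoftMax.weightedMean_le x hw₀ hw₁ hβ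
  · exact weightedRealSoftMax.le_of_forall_le x hw₀ hw₁ hβ fun l _ => le_sup' x (mem_univ l)
end

section
/- For every index i with 1 ≤ i ≤ N, the per-anchor OT-weighted contrastive term is bounded above by the per-anchor InfoNCE term: −log (d_{ii} / ∑_{j=1}^r d_{ij}) ≤ −log (e_{ii} / ∑_{j=1}^N e_{ij}). -/
/-! Since `q ≤ 1` and `s ≥ 0`, every OT-weighted affinity is at most the plain one, and the
restricted sum drops nonnegative terms, so the left denominator is the smaller one while the
numerators agree (`q i i = 1`); and `b ↦ -log (a / b)` is monotone. -/

open Real Finset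

lemma neg_log_div_le_neg_log_div_of_le {a b c : ℝ} (ha : 0 < a) (hb : 0 < b) (hbc : b ≤ c) :
    -log (a / b) ≤ -log (a / c) :=
  neg_le_neg <| log_le_log (div_pos ha (hb.trans_le hbc)) (div_le_div_of_nonneg_left ha.le hb hbc)

lemma exp_mul_div_le_exp_div {q s τ : ℝ} (hq : q ≤ 1) (hs : 0 ≤ s) (hτ : 0 ≤ τ) :
    exp (q * s / τ) ≤ exp (s / τ) :=
  exp_le_exp.2 <| div_le_div_of_nonneg_right (mul_le_of_le_one_left hs hq) hτ

theorem ot_per_anchor_le_infonce_general (N r : ℕ) (hr : 1 ≤ r)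
    (τ : ℝ) (hτ : 0 < τ) (s q : Fin N → Fin N → ℝ)
    (hs : ∀ i j, 0 ≤ s i j) (hq1 : ∀ i j, q i j ≤ 1)
    (hqd : ∀ i, q i i = 1) (i : Fin N) :
    -Real.log (Real.exp (q i i * s i i / τ) /
        ∑ j ∈ Finset.univ.filter (fun j : Fin N => (j : ℕ) < r),
          Real.exp (q i j * s i j / τ))
      ≤ -Real.log (Real.exp (s i i / τ) / ∑ j, Real.exp (s i j / τ)) := by
  rw [hqd, one_mul]
  refine neg_log_div_le_neg_log_div_of_le (exp_pos _)
    (sum_pos (fun j _ => exp_pos _) ⟨⟨0, i.pos⟩, by simpa using Nat.lt_of_succ_le hr⟩) ?_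
  calc ∑ j ∈ univ.filter (fun j : Fin N => (j : ℕ) < r), exp (q i j * s i j / τ)
      ≤ ∑ j ∈ univ.filter (fun j : Fin N => (j : ℕ) < r), exp (s i j / τ) :=
        sum_le_sum fun j _ => exp_mul_div_le_exp_div (hq1 i j) (hs i j) hτ.le
    _ ≤ ∑ j, exp (s i j / τ) :=
        sum_le_sum_of_subset_of_nonneg (filter_subset _ _) fun j _ _ => (exp_pos _).le

/-- Per-anchor bound: with OT-weighted affinities `d i j = exp (q i j * s i j / τ)` and
plain affinities `e i j = exp (s i j / τ)`, where `0 ≤ q i j ≤ 1`, `q i i = 1`,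
`s i j ≥ 0`, and restricted sums over `j` range over the first `r` indices,
`-log (d i i / ∑_{j < r} d i j) ≤ -log (e i i / ∑_j e i j)`. -/
theorem ot_per_anchor_le_infonce (N r : ℕ) (hN : 1 ≤ N) (hr : 1 ≤ r) (hrN : r ≤ N)
    (τ : ℝ) (hτ : 0 < τ) (s q : Fin N → Fin N → ℝ)
    (hs : ∀ i j, 0 ≤ s i j) (hq0 : ∀ i j, 0 ≤ q i j) (hq1 : ∀ i j, q i j ≤ 1)
    (hqd : ∀ i, q i i = 1) (i : Fin N) :
    -Real.log (Real.exp (q i i * s i i / τ) /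
        ∑ j ∈ Finset.univ.filter (fun j : Fin N => (j : ℕ) < r),
          Real.exp (q i j * s i j / τ))
      ≤ -Real.log (Real.exp (s i i / τ) / ∑ j, Real.exp (s i j / τ)) :=
  ot_per_anchor_le_infonce_general N r hr τ hτ s q hs hq1 hqd i
end

section
/- The averaged bidirectional OT-weighted contrastive loss is bounded above by the averaged bidirectional InfoNCE loss: −(1/N) * ∑_{i=1}^N [log (d_{ii} / ∑_{j=1}^r d_{ij}) + log (d_{ii} / ∑_{j=1}^r d_{ji})] ≤ −(1/N) * ∑_{i=1}^N [log (e_{ii} / ∑_{j=1}^N e_{ij}) + log (e_{ii} / ∑_{j=1}^N e_{ji})]. -/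
/-! The comparison is termwise. Since `q ≤ 1` and `s ≥ 0`, every OT-weighted score
`q i j * s i j / τ` is at most the plain score `s i j / τ`, with equality on the diagonal, and the
restricted sum has fewer positive terms than the full one. So each OT denominator is at most the
corresponding InfoNCE denominator, while the numerators agree. -/

open Finset Real

lemma log_exp_div_sum_le_log_exp_div_sum {ι : Type*} [Fintype ι] {t : Finset ι}
    (ht : t.Nonempty) {a b : ι → ℝ} (hab : ∀ j, a j ≤ b j) (x : ℝ) :
    log (exp x / ∑ j, exp (b j)) ≤ log (exp x / ∑ j ∈ t, exp (a j)) := by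
  have hpos : 0 < ∑ j ∈ t, exp (a j) := sum_pos (fun j _ => exp_pos _) ht
  have hle : ∑ j ∈ t, exp (a j) ≤ ∑ j, exp (b j) :=
    calc ∑ j ∈ t, exp (a j) ≤ ∑ j ∈ t, exp (b j) := sum_le_sum fun j _ => exp_le_exp.2 (hab j)
      _ ≤ ∑ j, exp (b j) := sum_le_univ_sum_of_nonneg fun j => (exp_pos _).le
  exact log_le_log (div_pos (exp_pos x) (hpos.trans_le hle))
    (div_le_div_of_nonneg_left (exp_pos x).le hpos hle)

theorem ot_bidirectional_le_infonce_general (N r : ℕ) (hN : 1 ≤ N) (hr : 1 ≤ r)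
    (τ : ℝ) (hτ : 0 < τ) (s q : Fin N → Fin N → ℝ)
    (hs : ∀ i j, 0 ≤ s i j) (hq1 : ∀ i j, q i j ≤ 1)
    (hqd : ∀ i, q i i = 1) :
    -(1 / (N : ℝ)) *
        ∑ i,
          (Real.log (Real.exp (q i i * s i i / τ) /
              ∑ j ∈ Finset.univ.filter (fun j : Fin N => (j : ℕ) < r),
                Real.exp (q i j * s i j / τ)) +
           Real.log (Real.exp (q i i * s i i / τ) /
              ∑ j ∈ Finset.univ.filter (fun j : Fin N => (j : ℕ) < r),
                Real.exp (q j i * s j i / τ)))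
      ≤ -(1 / (N : ℝ)) *
          ∑ i,
            (Real.log (Real.exp (s i i / τ) / ∑ j, Real.exp (s i j / τ)) +
             Real.log (Real.exp (s i i / τ) / ∑ j, Real.exp (s j i / τ))) := by
  have hne : (univ.filter fun j : Fin N => (j : ℕ) < r).Nonempty := ⟨⟨0, hN⟩, mem_filter.2 ⟨mem_univ _, hr⟩⟩
  have hscore : ∀ i j, q i j * s i j / τ ≤ s i j / τ := fun i j =>
    div_le_div_of_nonneg_right (mul_le_of_le_one_left (hs i j) (hq1 i j)) hτ.le
  simp only [hqd, one_mul]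
  rw [neg_mul, neg_mul, neg_le_neg_iff]
  exact mul_le_mul_of_nonneg_left
    (sum_le_sum fun i _ => add_le_add
      (log_exp_div_sum_le_log_exp_div_sum hne (hscore i) _)
      (log_exp_div_sum_le_log_exp_div_sum hne (fun j => hscore j i) _))
    (by positivity)

/-- The averaged bidirectional OT-weighted contrastive loss, with affinities
`d i j = exp (q i j * s i j / τ)` and restricted negative sums over the first `r`
indices, is bounded above by the averaged bidirectional InfoNCE loss built from the
plain affinities `e i j = exp (s i j / τ)` with full sums. -/
theorem ot_bidirectional_le_infonce (N r : ℕ) (hN : 1 ≤ N) (hr : 1 ≤ r) (hrN : r ≤ N)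
    (τ : ℝ) (hτ : 0 < τ) (s q : Fin N → Fin N → ℝ)
    (hs : ∀ i j, 0 ≤ s i j) (hq0 : ∀ i j, 0 ≤ q i j) (hq1 : ∀ i j, q i j ≤ 1)
    (hqd : ∀ i, q i i = 1) :
    -(1 / (N : ℝ)) *
        ∑ i,
          (Real.log (Real.exp (q i i * s i i / τ) /
              ∑ j ∈ Finset.univ.filter (fun j : Fin N => (j : ℕ) < r),
                Real.exp (q i j * s i j / τ)) +
           Real.log (Real.exp (q i i * s i i / τ) /
              ∑ j ∈ Finset.univ.filter (fun j : Fin N => (j : ℕ) < r),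
                Real.exp (q j i * s j i / τ)))
      ≤ -(1 / (N : ℝ)) *
          ∑ i,
            (Real.log (Real.exp (s i i / τ) / ∑ j, Real.exp (s i j / τ)) +
             Real.log (Real.exp (s i i / τ) / ∑ j, Real.exp (s j i / τ))) :=
  ot_bidirectional_le_infonce_general N r hN hr τ hτ s q hs hq1 hqd
end

section
/- Let Z be a nonempty finite type and P, Q : Z → ℝ probability mass functions. For every discriminator D : Z → ℝ with 0 < D(z) < 1 for all z, the binary cross-entropy loss satisfies L(D) = ∑_z P(z) * (−log D(z)) + ∑_z Q(z) * (−log (1 − D(z))) ≥ 2 * log 2 − 2 * JS(P, Q). -/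
lemma sub_le_mul_log_div (p a : ℝ) (hp : 0 ≤ p) (ha : 0 < a) :
    p - a ≤ p * Real.log (p / a) := by
  rcases eq_or_lt_of_le hp with h | h
  · simp [← h]; linarith
  · have h1 : Real.log (a / p) ≤ a / p - 1 :=
      Real.log_le_sub_one_of_pos (div_pos ha h)
    have h2 : Real.log (a / p) = - Real.log (p / a) := by
      rw [Real.log_div (ne_of_gt ha) (ne_of_gt h), Real.log_div (ne_of_gt h) (ne_of_gt ha)]
      ring
    rw [h2] at h1
    have h3 : p * (- Real.log (p / a)) ≤ p * (a / p - 1) :=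
      mul_le_mul_of_nonneg_left h1 hp
    have h4 : p * (a / p - 1) = a - p := by field_simp
    nlinarith

lemma key_pointwise (p q d : ℝ) (hp : 0 ≤ p) (hq : 0 ≤ q) (hd0 : 0 < d) (hd1 : d < 1) :
    p * Real.log 2 - p * Real.log (p / ((p + q) / 2)) +
      (q * Real.log 2 - q * Real.log (q / ((p + q) / 2)))
      ≤ p * (-Real.log d) + q * (-Real.log (1 - d)) := by
  rcases eq_or_lt_of_le (add_nonneg hp hq) with hpq | hpq
  · have hp0 : p = 0 := by linarith
    have hq0 : q = 0 := by linarith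
    simp [hp0, hq0]
  · set a := (p + q) * d with ha_def
    set b := (p + q) * (1 - d) with hb_def
    have ha : 0 < a := mul_pos hpq hd0
    have hb : 0 < b := mul_pos hpq (by linarith)
    have h1 : p - a ≤ p * Real.log (p / a) := sub_le_mul_log_div p a hp ha
    have h2 : q - b ≤ q * Real.log (q / b) := sub_le_mul_log_div q b hq hb
    have hab : a + b = p + q := by rw [ha_def, hb_def]; ring
    have hsum : 0 ≤ p * Real.log (p / a) + q * Real.log (q / b) := by linarith
    have e1 : p * Real.log 2 - p * Real.log (p / ((p + q) / 2)) =
        -(p * Real.log (p / a)) - p * Real.log d := by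
      rcases eq_or_lt_of_le hp with h | h
      · simp [← h]
      · rw [Real.log_div (ne_of_gt h) (by positivity),
            Real.log_div (ne_of_gt h) (ne_of_gt ha),
            Real.log_div (by positivity) (by norm_num),
            ha_def, Real.log_mul (ne_of_gt hpq) (ne_of_gt hd0)]
        ring
    have e2 : q * Real.log 2 - q * Real.log (q / ((p + q) / 2)) =
        -(q * Real.log (q / b)) - q * Real.log (1 - d) := by
      rcases eq_or_lt_of_le hq with h | h
      · simp [← h]
      · rw [Real.log_div (ne_of_gt h) (by positivity),
            Real.log_div (ne_of_gt h) (ne_of_gt hb),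
            Real.log_div (by positivity) (by norm_num),
            hb_def, Real.log_mul (ne_of_gt hpq) (by linarith)]
        ring
    rw [e1, e2]
    linarith

/-- For probability mass functions `P, Q` on a nonempty finite type `Z`, with mixture
`M z = (P z + Q z) / 2`, KL divergence `KL(P‖M) = ∑ z, P z * log (P z / M z)`
(with `0 * log 0 = 0`) and Jensen–Shannon divergence
`JS(P,Q) = (1/2) * KL(P‖M) + (1/2) * KL(Q‖M)`, every discriminator `D` with
`0 < D z < 1` satisfies the binary cross-entropy lower bound
`L(D) = ∑ z, P z * (-log (D z)) + ∑ z, Q z * (-log (1 - D z)) ≥ 2 log 2 - 2 JS(P,Q)`. -/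
theorem bce_ge_two_log_two_sub_two_js (Z : Type*) [Fintype Z] [Nonempty Z]
    (P Q : Z → ℝ)
    (hP0 : ∀ z, 0 ≤ P z) (hP1 : ∑ z, P z = 1)
    (hQ0 : ∀ z, 0 ≤ Q z) (hQ1 : ∑ z, Q z = 1)
    (D : Z → ℝ) (hD0 : ∀ z, 0 < D z) (hD1 : ∀ z, D z < 1) :
    2 * Real.log 2 -
        2 * ((1 / 2 : ℝ) * ∑ z, P z * Real.log (P z / ((P z + Q z) / 2)) +
             (1 / 2 : ℝ) * ∑ z, Q z * Real.log (Q z / ((P z + Q z) / 2)))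
      ≤ ∑ z, P z * (-Real.log (D z)) + ∑ z, Q z * (-Real.log (1 - D z)) := by
  have hmain : ∑ z, (P z * Real.log 2 - P z * Real.log (P z / ((P z + Q z) / 2)) +
      (Q z * Real.log 2 - Q z * Real.log (Q z / ((P z + Q z) / 2))))
      ≤ ∑ z, (P z * (-Real.log (D z)) + Q z * (-Real.log (1 - D z))) :=
    Finset.sum_le_sum fun z _ =>
      key_pointwise (P z) (Q z) (D z) (hP0 z) (hQ0 z) (hD0 z) (hD1 z)
  have hl2 : ∑ z, P z * Real.log 2 = Real.log 2 := by
    rw [← Finset.sum_mul, hP1, one_mul]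
  have hl2' : ∑ z, Q z * Real.log 2 = Real.log 2 := by
    rw [← Finset.sum_mul, hQ1, one_mul]
  simp only [Finset.sum_add_distrib, Finset.sum_sub_distrib] at hmain
  rw [hl2, hl2'] at hmain
  linarith
end

section
/- Let Z be a nonempty finite type and P, Q : Z → ℝ probability mass functions with P(z) > 0 and Q(z) > 0 for all z. Define the optimal discriminator D*(z) = P(z) / (P(z) + Q(z)). Then the binary cross-entropy loss attains the value L(D*) = 2 * log 2 − 2 * JS(P, Q). -/
/-! Since `1 - P/(P+Q) = Q/(P+Q)`, the loss of `D*` is `-∑ P log (P/(P+Q)) - ∑ Q log (Q/(P+Q))`;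
replacing `P+Q` by the mixture `(P+Q)/2` adds `log 2` to each of the two sums, because `P` and
`Q` each have total mass one. -/

open Finset Real

theorem sum_mul_log_div_half {ι : Type*} (s : Finset ι) (P S : ι → ℝ)
    (hS : ∀ i ∈ s, P i ≠ 0 → S i ≠ 0) (hP1 : ∑ i ∈ s, P i = 1) :
    ∑ i ∈ s, P i * log (P i / (S i / 2)) = ∑ i ∈ s, P i * log (P i / S i) + log 2 := by
  have pointwise : ∀ i ∈ s,
      P i * log (P i / (S i / 2)) = P i * log (P i / S i) + P i * log 2 := by
    intro i hi
    by_cases hPi : P i = 0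
    · simp [hPi]
    have hSi := hS i hi hPi
    rw [div_div_eq_mul_div, mul_div_right_comm,
      log_mul (div_ne_zero hPi hSi) two_ne_zero, mul_add]
  rw [sum_congr rfl pointwise, sum_add_distrib, ← sum_mul, hP1, one_mul]

theorem bce_optimal_discriminator_value_general (Z : Type*) [Fintype Z]
    (P Q : Z → ℝ)
    (hP0 : ∀ z, 0 < P z) (hP1 : ∑ z, P z = 1)
    (hQ0 : ∀ z, 0 < Q z) (hQ1 : ∑ z, Q z = 1) :
    ∑ z, P z * (-Real.log (P z / (P z + Q z))) +
        ∑ z, Q z * (-Real.log (1 - P z / (P z + Q z)))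
      = 2 * Real.log 2 -
          2 * ((1 / 2 : ℝ) * ∑ z, P z * Real.log (P z / ((P z + Q z) / 2)) +
               (1 / 2 : ℝ) * ∑ z, Q z * Real.log (Q z / ((P z + Q z) / 2))) := by
  have hPQ : ∀ z, P z + Q z ≠ 0 := fun z => (add_pos (hP0 z) (hQ0 z)).ne'
  have one_sub_optimal : ∀ z, 1 - P z / (P z + Q z) = Q z / (P z + Q z) := fun z => by
    rw [one_sub_div (hPQ z), add_sub_cancel_left]
  rw [sum_mul_log_div_half univ P _ (fun z _ _ => hPQ z) hP1,
    sum_mul_log_div_half univ Q _ (fun z _ _ => hPQ z) hQ1]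
  simp only [one_sub_optimal, mul_neg, sum_neg_distrib]
  ring

/-- For strictly positive probability mass functions `P, Q` on a nonempty finite type
`Z`, the optimal discriminator `D* z = P z / (P z + Q z)` attains the binary
cross-entropy value `L(D*) = 2 log 2 - 2 JS(P,Q)`, where
`JS(P,Q) = (1/2) * KL(P‖M) + (1/2) * KL(Q‖M)` with `M z = (P z + Q z) / 2`. -/
theorem bce_optimal_discriminator_value (Z : Type*) [Fintype Z] [Nonempty Z]
    (P Q : Z → ℝ)
    (hP0 : ∀ z, 0 < P z) (hP1 : ∑ z, P z = 1)
    (hQ0 : ∀ z, 0 < Q z) (hQ1 : ∑ z, Q z = 1) :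
    ∑ z, P z * (-Real.log (P z / (P z + Q z))) +
        ∑ z, Q z * (-Real.log (1 - P z / (P z + Q z)))
      = 2 * Real.log 2 -
          2 * ((1 / 2 : ℝ) * ∑ z, P z * Real.log (P z / ((P z + Q z) / 2)) +
               (1 / 2 : ℝ) * ∑ z, Q z * Real.log (Q z / ((P z + Q z) / 2))) :=
  bce_optimal_discriminator_value_general Z P Q hP0 hP1 hQ0 hQ1
end

section
/- Let Z be a nonempty finite type and P, Q : Z → ℝ probability mass functions with P(z) > 0 and Q(z) > 0 for all z, and let D*(z) = P(z) / (P(z) + Q(z)). Then D* minimizes the binary cross-entropy loss: for every D : Z → ℝ with 0 < D(z) < 1 for all z, L(D) ≥ L(D*). -/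
open Real

lemma Real.mul_log_le_mul_log_add_sub {x y : ℝ} (hx : 0 < x) (hy : 0 < y) :
    x * log y ≤ x * log x + (y - x) := by
  have h := mul_le_mul_of_nonneg_left (log_le_sub_one_of_pos (div_pos hy hx)) hx.le
  rw [log_div hy.ne' hx.ne', mul_sub, mul_sub, mul_div_cancel₀ _ hx.ne', mul_one] at h
  linarith

/-- Gibbs' inequality on two points: bounding `a log (d (a + b))` and `b log ((1 - d) (a + b))`
by `Real.mul_log_le_mul_log_add_sub`, the linear error terms sum to zero. -/
lemma binary_cross_entropy_minimized_at_div_add {a b d : ℝ} (ha : 0 < a) (hb : 0 < b) (hd0 : 0 < d) (hd1 : d < 1) :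
    a * (-log (a / (a + b))) + b * (-log (1 - a / (a + b)))
      ≤ a * (-log d) + b * (-log (1 - d)) := by
  have hab : 0 < a + b := add_pos ha hb
  have hd1' : 0 < 1 - d := sub_pos.mpr hd1
  have gibbs_a := mul_log_le_mul_log_add_sub ha (mul_pos hd0 hab)
  have gibbs_b := mul_log_le_mul_log_add_sub hb (mul_pos hd1' hab)
  have hcompl : 1 - a / (a + b) = b / (a + b) := by field_simp; ring
  rw [log_mul hd0.ne' hab.ne'] at gibbs_a
  rw [log_mul hd1'.ne' hab.ne'] at gibbs_b
  rw [hcompl, log_div ha.ne' hab.ne', log_div hb.ne' hab.ne']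
  linarith

theorem bce_optimal_discriminator_minimizes_general (Z : Type*) [Fintype Z]
    (P Q : Z → ℝ)
    (hP0 : ∀ z, 0 < P z)
    (hQ0 : ∀ z, 0 < Q z)
    (D : Z → ℝ) (hD0 : ∀ z, 0 < D z) (hD1 : ∀ z, D z < 1) :
    ∑ z, P z * (-Real.log (P z / (P z + Q z))) +
        ∑ z, Q z * (-Real.log (1 - P z / (P z + Q z)))
      ≤ ∑ z, P z * (-Real.log (D z)) + ∑ z, Q z * (-Real.log (1 - D z)) := by
  rw [← Finset.sum_add_distrib, ← Finset.sum_add_distrib]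
  exact Finset.sum_le_sum fun z _ => binary_cross_entropy_minimized_at_div_add (hP0 z) (hQ0 z) (hD0 z) (hD1 z)

/-- For strictly positive probability mass functions `P, Q` on a nonempty finite type
`Z`, the discriminator `D* z = P z / (P z + Q z)` minimizes the binary cross-entropy
loss `L(D) = ∑ z, P z * (-log (D z)) + ∑ z, Q z * (-log (1 - D z))` among all
discriminators `D` with `0 < D z < 1`. -/
theorem bce_optimal_discriminator_minimizes (Z : Type*) [Fintype Z] [Nonempty Z]
    (P Q : Z → ℝ)
    (hP0 : ∀ z, 0 < P z) (hP1 : ∑ z, P z = 1)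
    (hQ0 : ∀ z, 0 < Q z) (hQ1 : ∑ z, Q z = 1)
    (D : Z → ℝ) (hD0 : ∀ z, 0 < D z) (hD1 : ∀ z, D z < 1) :
    ∑ z, P z * (-Real.log (P z / (P z + Q z))) +
        ∑ z, Q z * (-Real.log (1 - P z / (P z + Q z)))
      ≤ ∑ z, P z * (-Real.log (D z)) + ∑ z, Q z * (-Real.log (1 - D z)) :=
  bce_optimal_discriminator_minimizes_general Z P Q hP0 hQ0 D hD0 hD1
end

section
/- Let H and Y be nonempty finite types and π : H × Y → ℝ a joint probability mass function whose H-marginal p_H(h) = ∑_y π(h, y) is positive for every h. Define the Bayes error P_e = 1 − ∑_h max_y π(h, y) and the conditional entropy H(Y | H) = −∑_{(h,y) : π(h,y) > 0} π(h, y) * log (π(h, y) / p_H(h)). If 0 ≤ P_e ≤ 1 − 1 / |Y|, then −log (1 − P_e) ≤ H(Y | H). -/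
/-!
Since `μ (h, y) ≤ max_y μ (h, y) =: m h`, the inner sum over `y` of the conditional entropy
is at least `-p_H(h) log (m h / p_H(h))`. Concavity of `log` with the weights `p_H(h)` then
gives `∑ p_H(h) log (m h / p_H(h)) ≤ log (∑ m h)`, and `∑ m h = 1 - P_e`.
-/

open Finset Real

theorem mul_log_div_le_mul_log_div_of_le {x M c : ℝ} (hx : 0 ≤ x) (hxM : x ≤ M) (hc : 0 < c) :
    x * log (x / c) ≤ x * log (M / c) := by
  rcases hx.eq_or_lt with rfl | hx
  · simp
  · gcongr

theorem sum_mul_log_div_le_log_sum {ι : Type*} (s : Finset ι) {w a : ι → ℝ}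
    (hw : ∀ i ∈ s, 0 < w i) (hw1 : ∑ i ∈ s, w i = 1) (ha : ∀ i ∈ s, 0 < a i) :
    ∑ i ∈ s, w i * log (a i / w i) ≤ log (∑ i ∈ s, a i) :=
  calc ∑ i ∈ s, w i * log (a i / w i) ≤ log (∑ i ∈ s, w i * (a i / w i)) := by
        simpa using strictConcaveOn_log_Ioi.concaveOn.le_map_sum (fun i hi => (hw i hi).le) hw1
          fun i hi => div_pos (ha i hi) (hw i hi)
    _ = log (∑ i ∈ s, a i) := by
        congr 1
        exact sum_congr rfl fun i hi => mul_div_cancel₀ _ (hw i hi).ne'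

theorem bayes_error_le_conditional_entropy_general (H Y : Type*)
    [Fintype H] [Fintype Y] [Nonempty Y]
    (μ : H × Y → ℝ) (hμ0 : ∀ p, 0 ≤ μ p) (hμ1 : ∑ p, μ p = 1)
    (hmarg : ∀ h, 0 < ∑ y, μ (h, y))
    (Pe : ℝ)
    (hPe : Pe = 1 - ∑ h, Finset.univ.sup' Finset.univ_nonempty (fun y => μ (h, y))) :
    -Real.log (1 - Pe)
      ≤ -∑ p ∈ Finset.univ.filter (fun p : H × Y => 0 < μ p),
          μ p * Real.log (μ p / ∑ y, μ (p.1, y)) := by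
  set m : H → ℝ := fun h => univ.sup' univ_nonempty fun y => μ (h, y)
  have hm_pos (h : H) : 0 < m h := by
    obtain ⟨y, -, hy⟩ := exists_lt_of_sum_lt (by simpa using hmarg h : ∑ _ : Y, (0 : ℝ) < _)
    exact (lt_sup'_iff _).2 ⟨y, mem_univ y, hy⟩
  have hpH : ∑ h, ∑ y, μ (h, y) = 1 := by rw [← hμ1, Fintype.sum_prod_type]
  rw [hPe, sub_sub_cancel, sum_filter_of_ne fun p _ hp => (hμ0 p).lt_of_ne' (left_ne_zero_of_mul hp),
    Fintype.sum_prod_type, neg_le_neg_iff]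
  calc ∑ h, ∑ y, μ (h, y) * log (μ (h, y) / ∑ y', μ (h, y'))
      ≤ ∑ h, ∑ y, μ (h, y) * log (m h / ∑ y', μ (h, y')) :=
        sum_le_sum fun h _ => sum_le_sum fun y _ =>
          mul_log_div_le_mul_log_div_of_le (hμ0 _) (le_sup' (fun y => μ (h, y)) (mem_univ y))
            (hmarg h)
    _ = ∑ h, (∑ y, μ (h, y)) * log (m h / ∑ y', μ (h, y')) := by simp_rw [sum_mul]
    _ ≤ log (∑ h, m h) :=
        sum_mul_log_div_le_log_sum _ (fun h _ => hmarg h) hpH fun h _ => hm_pos h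

/-- Fano-type inequality: for a joint probability mass function `μ` on `H × Y` with
positive `H`-marginal, Bayes error `Pe = 1 - ∑ h, max_y μ (h, y)` satisfying
`0 ≤ Pe ≤ 1 - 1 / |Y|`, we have `-log (1 - Pe) ≤ H(Y | H)`, where
`H(Y | H) = -∑_{(h,y) : μ(h,y) > 0} μ (h, y) * log (μ (h, y) / ∑ y', μ (h, y'))`. -/
theorem bayes_error_le_conditional_entropy (H Y : Type*)
    [Fintype H] [Nonempty H] [Fintype Y] [Nonempty Y]
    (μ : H × Y → ℝ) (hμ0 : ∀ p, 0 ≤ μ p) (hμ1 : ∑ p, μ p = 1)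
    (hmarg : ∀ h, 0 < ∑ y, μ (h, y))
    (Pe : ℝ)
    (hPe : Pe = 1 - ∑ h, Finset.univ.sup' Finset.univ_nonempty (fun y => μ (h, y)))
    (hPe0 : 0 ≤ Pe) (hPe1 : Pe ≤ 1 - 1 / (Fintype.card Y : ℝ)) :
    -Real.log (1 - Pe)
      ≤ -∑ p ∈ Finset.univ.filter (fun p : H × Y => 0 < μ p),
          μ p * Real.log (μ p / ∑ y, μ (p.1, y)) :=
  bayes_error_le_conditional_entropy_general H Y μ hμ0 hμ1 hmarg Pe hPe
end

section
/- Sinkhorn's theorem: let n, m ≥ 1, let K : Fin n → Fin m → ℝ have strictly positive entries, and let μ1 : Fin n → ℝ and μ2 : Fin m → ℝ have strictly positive entries with ∑_i μ1_i = ∑_j μ2_j = 1. Then there exist vectors u : Fin n → ℝ and v : Fin m → ℝ with strictly positive entries such that the matrix Q with Q_{ij} = u_i * K_{ij} * v_j satisfies ∀ i, ∑_j Q_{ij} = μ1_i and ∀ j, ∑_i Q_{ij} = μ2_j. -/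
open Finset Real

/-!
Minimise the potential `f y = ∑ᵢ μᵢ log (∑ⱼ Kᵢⱼ exp yⱼ) - ∑ⱼ νⱼ yⱼ` over `y : κ → ℝ`.
With `u i = μ i / ∑ⱼ Kᵢⱼ exp yⱼ` and `v = exp y`, the rows of `diag u K diag v` have the right
sums for every `y`, and `∂f/∂yⱼ` is the `j`-th column sum minus `νⱼ`, so a minimiser solves the
problem. Since `∑ μ = ∑ ν`, `f` is invariant under adding constants to `y`; on the slice
`y j₀ = 0` it is coercive, because `f y ≥ log (min K) + ∑ⱼ νⱼ (max y - yⱼ)`, so a minimiser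
exists.
-/

namespace Sinkhorn

variable {ι κ : Type*} [Fintype κ]

noncomputable def rowMass (K : ι → κ → ℝ) (y : κ → ℝ) (i : ι) : ℝ := ∑ j, K i j * exp (y j)

noncomputable def potential [Fintype ι] (K : ι → κ → ℝ) (μ : ι → ℝ) (ν : κ → ℝ)
    (y : κ → ℝ) : ℝ :=
  ∑ i, μ i * log (rowMass K y i) - ∑ j, ν j * y j

variable {K : ι → κ → ℝ} {μ : ι → ℝ} {ν : κ → ℝ}

lemma rowMass_pos [Nonempty κ] (hK : ∀ i j, 0 < K i j) (y : κ → ℝ) (i : ι) :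
    0 < rowMass K y i :=
  sum_pos (fun j _ => mul_pos (hK i j) (exp_pos _)) univ_nonempty

lemma continuous_rowMass (K : ι → κ → ℝ) (i : ι) : Continuous fun y => rowMass K y i := by
  unfold rowMass; fun_prop

lemma continuous_potential [Fintype ι] [Nonempty κ] (hK : ∀ i j, 0 < K i j) :
    Continuous (potential K μ ν) :=
  (continuous_finsetSum _ fun i _ => continuous_const.mul
    ((continuous_rowMass K i).log fun y => (rowMass_pos hK y i).ne')).sub (by fun_prop)

lemma rowMass_add_const (y : κ → ℝ) (c : ℝ) (i : ι) :
    rowMass K (fun j => y j + c) i = exp c * rowMass K y i := by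
  simp only [rowMass, exp_add, mul_sum]
  exact sum_congr rfl fun j _ => by ring

lemma potential_add_const [Fintype ι] [Nonempty κ] (hK : ∀ i j, 0 < K i j)
    (hμν : ∑ i, μ i = ∑ j, ν j) (y : κ → ℝ) (c : ℝ) :
    potential K μ ν (fun j => y j + c) = potential K μ ν y := by
  simp only [potential, rowMass_add_const, log_mul (exp_pos c).ne' (rowMass_pos hK y _).ne',
    log_exp, mul_add, sum_add_distrib, ← sum_mul, hμν]
  ring

lemma mul_sub_le_potential_sub_log [Fintype ι] (hμ : ∀ i, 0 ≤ μ i) (hμ1 : ∑ i, μ i = 1)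
    (hν : ∀ j, 0 ≤ ν j) (hν1 : ∑ j, ν j = 1) {ε : ℝ} (hε : 0 < ε) (hKε : ∀ i j, ε ≤ K i j)
    {y : κ → ℝ} {jmax : κ} (hy : ∀ j, y j ≤ y jmax) (j : κ) :
    ν j * (y jmax - y j) ≤ potential K μ ν y - log ε := by
  have hrow : ∀ i, log ε + y jmax ≤ log (rowMass K y i) := fun i => by
    rw [← log_exp (y jmax), ← log_mul hε.ne' (exp_pos _).ne']
    refine log_le_log (by positivity) ?_
    calc ε * exp (y jmax) ≤ K i jmax * exp (y jmax) := by gcongr; exact hKε i jmax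
      _ ≤ rowMass K y i := single_le_sum (f := fun j => K i j * exp (y j))
          (fun j _ => mul_nonneg (hε.le.trans (hKε i j)) (exp_pos _).le) (mem_univ jmax)
  have hlower : log ε + y jmax ≤ ∑ i, μ i * log (rowMass K y i) :=
    calc log ε + y jmax = ∑ i, μ i * (log ε + y jmax) := by rw [← sum_mul, hμ1, one_mul]
      _ ≤ _ := sum_le_sum fun i _ => mul_le_mul_of_nonneg_left (hrow i) (hμ i)
  have hgap : ν j * (y jmax - y j) ≤ ∑ j', ν j' * (y jmax - y j') :=
    single_le_sum (f := fun j' => ν j' * (y jmax - y j'))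
      (fun j' _ => mul_nonneg (hν j') (sub_nonneg.2 (hy j'))) (mem_univ j)
  have hsum : ∑ j', ν j' * (y jmax - y j') = y jmax - ∑ j', ν j' * y j' := by
    simp only [mul_sub, sum_sub_distrib, ← sum_mul, hν1, one_mul]
  rw [potential]
  linarith

lemma isCompact_potential_sublevel_slice [Fintype ι] [Nonempty ι] (hK : ∀ i j, 0 < K i j)
    (hμ : ∀ i, 0 ≤ μ i) (hμ1 : ∑ i, μ i = 1) (hν : ∀ j, 0 < ν j) (hν1 : ∑ j, ν j = 1)
    (j₀ : κ) (C : ℝ) : IsCompact {y | y j₀ = 0 ∧ potential K μ ν y ≤ C} := by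
  have : Nonempty κ := ⟨j₀⟩
  obtain ⟨⟨i₁, j₁⟩, hmin⟩ := Finite.exists_min fun p : ι × κ => K p.1 p.2
  set D := C - log (K i₁ j₁)
  have hbox : {y | y j₀ = 0 ∧ potential K μ ν y ≤ C} ⊆
      Set.univ.pi fun j => Set.Icc (-(D / ν j)) (D / ν j₀) := by
    rintro y ⟨hy₀, hyC⟩ j -
    obtain ⟨jmax, hjmax⟩ := Finite.exists_max y
    have hgap : ∀ j, ν j * (y jmax - y j) ≤ D := fun j =>
      (mul_sub_le_potential_sub_log hμ hμ1 (fun j => (hν j).le) hν1 (hK i₁ j₁)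
        (fun i j => hmin (i, j)) hjmax j).trans (sub_le_sub_right hyC _)
    have hmax_nonneg : 0 ≤ y jmax := hy₀ ▸ hjmax j₀
    have hmax_le : y jmax ≤ D / ν j₀ := by
      rw [le_div_iff₀ (hν j₀)]; simpa [hy₀, mul_comm] using hgap j₀
    have hgap_j : y jmax - y j ≤ D / ν j := by
      rw [le_div_iff₀ (hν j), mul_comm]; exact hgap j
    constructor <;> linarith [hjmax j]
  refine (isCompact_univ_pi fun j => isCompact_Icc).of_isClosed_subset ?_ hbox
  exact (isClosed_eq (continuous_apply j₀) continuous_const).inter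
    (isClosed_le (continuous_potential hK) continuous_const)

lemma exists_forall_potential_le [Fintype ι] [Nonempty ι] [Nonempty κ] (hK : ∀ i j, 0 < K i j)
    (hμ : ∀ i, 0 ≤ μ i) (hμ1 : ∑ i, μ i = 1) (hν : ∀ j, 0 < ν j) (hν1 : ∑ j, ν j = 1) :
    ∃ y, ∀ z, potential K μ ν y ≤ potential K μ ν z := by
  let j₀ : κ := Classical.arbitrary κ
  have h0 : (0 : κ → ℝ) ∈ {y | y j₀ = 0 ∧ potential K μ ν y ≤ potential K μ ν 0} :=
    ⟨rfl, le_rfl⟩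
  obtain ⟨y, ⟨-, hy0⟩, hymin⟩ :=
    (isCompact_potential_sublevel_slice hK hμ hμ1 hν hν1 j₀ _).exists_isMinOn ⟨0, h0⟩
      (continuous_potential hK).continuousOn
  refine ⟨y, fun z => ?_⟩
  rw [← potential_add_const hK (hμ1.trans hν1.symm) z (-z j₀)]
  by_cases hz : potential K μ ν (fun j => z j + -z j₀) ≤ potential K μ ν 0
  · exact hymin ⟨add_neg_cancel _, hz⟩
  · exact hy0.trans (le_of_not_ge hz)

lemma hasDerivAt_rowMass_line (K : ι → κ → ℝ) (y d : κ → ℝ) (i : ι) :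
    HasDerivAt (fun t : ℝ => rowMass K (y + t • d) i) (∑ j, K i j * exp (y j) * d j) 0 := by
  have h := HasDerivAt.fun_sum (u := univ) fun j _ =>
    ((((hasDerivAt_id (0 : ℝ)).mul_const (d j)).const_add (y j)).exp).const_mul (K i j)
  simpa [rowMass, mul_assoc] using h

lemma hasDerivAt_potential_line [Fintype ι] [Nonempty κ] (hK : ∀ i j, 0 < K i j) (y d : κ → ℝ) :
    HasDerivAt (fun t : ℝ => potential K μ ν (y + t • d))
      (∑ i, μ i * ((∑ j, K i j * exp (y j) * d j) / rowMass K y i) - ∑ j, ν j * d j) 0 := by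
  have hlog := HasDerivAt.fun_sum (u := univ) fun i _ =>
    ((hasDerivAt_rowMass_line K y d i).log
      (by simpa [rowMass] using (rowMass_pos hK y i).ne')).const_mul (μ i)
  have hlin := HasDerivAt.fun_sum (u := univ) fun j _ =>
    (((hasDerivAt_id (0 : ℝ)).mul_const (d j)).const_add (y j)).const_mul (ν j)
  simpa [potential] using hlog.fun_sub hlin

lemma sum_scaling_row [Nonempty κ] (hK : ∀ i j, 0 < K i j) (y : κ → ℝ) (i : ι) :
    ∑ j, μ i / rowMass K y i * K i j * exp (y j) = μ i := by
  simp only [mul_assoc, ← mul_sum]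
  exact div_mul_cancel₀ _ (rowMass_pos hK y i).ne'

lemma sum_scaling_col_of_forall_potential_le [Fintype ι] [Nonempty κ] (hK : ∀ i j, 0 < K i j)
    {y : κ → ℝ} (hy : ∀ z, potential K μ ν y ≤ potential K μ ν z) (j : κ) :
    ∑ i, μ i / rowMass K y i * K i j * exp (y j) = ν j := by
  classical
  have hmin : IsLocalMin (fun t : ℝ => potential K μ ν (y + t • Pi.single j 1)) 0 :=
    Filter.Eventually.of_forall fun t => by simpa using hy (y + t • Pi.single j 1)
  have hcrit := hmin.hasDerivAt_eq_zero (hasDerivAt_potential_line hK y (Pi.single j 1))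
  simp only [Pi.single_apply, mul_ite, mul_one, mul_zero, sum_ite_eq', mem_univ, if_true]
    at hcrit
  rw [← sub_eq_zero, ← hcrit]
  congr 1
  exact sum_congr rfl fun i _ => by ring

end Sinkhorn

/-- Sinkhorn's theorem: for a strictly positive kernel `K : Fin n → Fin m → ℝ` and
strictly positive marginal vectors `μ1, μ2` each summing to 1, there exist strictly
positive scaling vectors `u, v` such that `Q i j = u i * K i j * v j` has row sums
`μ1` and column sums `μ2`. -/
theorem sinkhorn_exists_scaling (n m : ℕ) (hn : 1 ≤ n) (hm : 1 ≤ m)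
    (K : Fin n → Fin m → ℝ) (hK : ∀ i j, 0 < K i j)
    (μ1 : Fin n → ℝ) (hμ1 : ∀ i, 0 < μ1 i) (hμ1sum : ∑ i, μ1 i = 1)
    (μ2 : Fin m → ℝ) (hμ2 : ∀ j, 0 < μ2 j) (hμ2sum : ∑ j, μ2 j = 1) :
    ∃ (u : Fin n → ℝ) (v : Fin m → ℝ),
      (∀ i, 0 < u i) ∧ (∀ j, 0 < v j) ∧
      (∀ i, ∑ j, u i * K i j * v j = μ1 i) ∧
      (∀ j, ∑ i, u i * K i j * v j = μ2 j) := by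
  have : Nonempty (Fin n) := Fin.pos_iff_nonempty.mp hn
  have : Nonempty (Fin m) := Fin.pos_iff_nonempty.mp hm
  obtain ⟨y, hy⟩ :=
    Sinkhorn.exists_forall_potential_le hK (fun i => (hμ1 i).le) hμ1sum hμ2 hμ2sum
  exact ⟨fun i => μ1 i / Sinkhorn.rowMass K y i, fun j => exp (y j),
    fun i => div_pos (hμ1 i) (Sinkhorn.rowMass_pos hK y i), fun j => exp_pos _,
    Sinkhorn.sum_scaling_row hK y, Sinkhorn.sum_scaling_col_of_forall_potential_le hK hy⟩
end

section
/- Let n, m ≥ 1, ε > 0, S : Fin n → Fin m → ℝ, and let μ1 : Fin n → ℝ and μ2 : Fin m → ℝ have strictly positive entries with ∑_i μ1_i = ∑_j μ2_j = 1. Consider the entropic optimal transport objective F(Q) = ∑_{i,j} Q_{ij} * S_{ij} + ε * H(Q) over the compact convex set of couplings of μ1 and μ2, where H(Q) = −∑_{i,j} Q_{ij} * log Q_{ij} with 0 * log 0 = 0. Then F attains its maximum at a unique coupling Q*, this Q* has strictly positive entries, and there exist strictly positive vectors κ1 : Fin n → ℝ and κ2 : Fin m → ℝ such that Q*_{ij}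 = κ1_i * exp(S_{ij} / ε) * κ2_j for all i, j. -/
/-- A coupling of positive marginal vectors `μ1 : Fin n → ℝ` and `μ2 : Fin m → ℝ`:
a matrix with nonnegative entries whose row sums equal `μ1` and column sums equal `μ2`. -/
def IsCoupling {n m : ℕ} (μ1 : Fin n → ℝ) (μ2 : Fin m → ℝ)
    (Q : Fin n → Fin m → ℝ) : Prop :=
  (∀ i j, 0 ≤ Q i j) ∧ (∀ i, ∑ j, Q i j = μ1 i) ∧ (∀ j, ∑ i, Q i j = μ2 j)

/-- The entropic optimal transport objective
`F(Q) = ∑ i j, Q i j * S i j + ε * H(Q)` with `H(Q) = -∑ i j, Q i j * log (Q i j)`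
(convention `0 * log 0 = 0`). -/
noncomputable def entropicOTObjective {n m : ℕ} (ε : ℝ)
    (S : Fin n → Fin m → ℝ) (Q : Fin n → Fin m → ℝ) : ℝ :=
  (∑ i, ∑ j, Q i j * S i j) + ε * (-∑ i, ∑ j, Q i j * Real.log (Q i j))

/-!
The objective is continuous on the compact convex set of couplings and strictly concave on the
nonnegative matrices, so it has exactly one maximizer `Q`. Since `negMulLog` has infinite slope
at `0`, moving from a coupling with a zero entry a little towards the product coupling `μ1 ⊗ μ2`
increases the objective; hence `Q > 0`. Then `Q` is stationary along every direction with zero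
row and column sums, and testing this with the rectangles `(eᵢ - e_I) ⊗ (eⱼ - e_J)` shows that
the gradient `S - ε log Q` splits as `a i + b j`, which is the Gibbs form.
-/

open Real Finset

theorem StrictConcaveOn.pi_sum {ι E : Type*} [Fintype ι] [AddCommGroup E] [Module ℝ E]
    {s : Set E} {f : ι → E → ℝ} (hf : ∀ i, StrictConcaveOn ℝ s (f i)) :
    StrictConcaveOn ℝ (Set.univ.pi fun _ => s) fun x => ∑ i, f i (x i) := by
  refine ⟨convex_pi fun i _ => (hf i).1, fun x hx y hy hxy a b ha hb hab => ?_⟩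
  simp only [Set.mem_univ_pi] at hx hy
  obtain ⟨i, hi⟩ := Function.ne_iff.1 hxy
  simp only [smul_eq_mul, mul_sum, ← sum_add_distrib, Pi.add_apply, Pi.smul_apply]
  exact sum_lt_sum (fun k _ => (hf k).concaveOn.2 (hx k) (hy k) ha.le hb.le hab)
    ⟨i, mem_univ i, (hf i).2 (hx i) (hy i) hi ha hb hab⟩

theorem strictConcaveOn_mul_add_mul_negMulLog {ε : ℝ} (hε : 0 < ε) (s : ℝ) :
    StrictConcaveOn ℝ (Set.Ici 0) fun q => q * s + ε * negMulLog q := by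
  refine ⟨convex_Ici 0, fun x hx y hy hxy a b ha hb hab => ?_⟩
  have h := mul_lt_mul_of_pos_left (strictConcaveOn_negMulLog.2 hx hy hxy ha hb hab) hε
  simp only [smul_eq_mul] at h ⊢
  linarith

theorem sum_single_sub_single_mul {ι : Type*} [Fintype ι] [DecidableEq ι] (i I : ι)
    (f : ι → ℝ) : ∑ a, (Pi.single i 1 - Pi.single I 1 : ι → ℝ) a * f a = f i - f I := by
  simp [sub_mul, sum_sub_distrib, Pi.single_apply]

section Couplings

variable {n m : ℕ} {μ1 : Fin n → ℝ} {μ2 : Fin m → ℝ}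

theorem isCoupling_mul (hμ1 : ∀ i, 0 ≤ μ1 i) (hμ1sum : ∑ i, μ1 i = 1)
    (hμ2 : ∀ j, 0 ≤ μ2 j) (hμ2sum : ∑ j, μ2 j = 1) :
    IsCoupling μ1 μ2 fun i j => μ1 i * μ2 j :=
  ⟨fun i j => mul_nonneg (hμ1 i) (hμ2 j),
    fun i => by rw [← mul_sum, hμ2sum, mul_one],
    fun j => by rw [← sum_mul, hμ1sum, one_mul]⟩

theorem convex_setOf_isCoupling : Convex ℝ {Q | IsCoupling μ1 μ2 Q} := by
  rintro P ⟨hP0, hProw, hPcol⟩ Q ⟨hQ0, hQrow, hQcol⟩ a b ha hb hab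
  refine ⟨fun i j => ?_, fun i => ?_, fun j => ?_⟩
  · simp only [Pi.add_apply, Pi.smul_apply, smul_eq_mul]
    have := hP0 i j; have := hQ0 i j; positivity
  · simp only [Pi.add_apply, Pi.smul_apply, smul_eq_mul, sum_add_distrib, ← mul_sum,
      hProw, hQrow, ← add_mul, hab, one_mul]
  · simp only [Pi.add_apply, Pi.smul_apply, smul_eq_mul, sum_add_distrib, ← mul_sum,
      hPcol, hQcol, ← add_mul, hab, one_mul]

theorem IsCoupling.le_marginal_left {Q : Fin n → Fin m → ℝ} (hQ : IsCoupling μ1 μ2 Q) (i : Fin n)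
    (j : Fin m) : Q i j ≤ μ1 i :=
  hQ.2.1 i ▸ single_le_sum (fun j _ => hQ.1 i j) (mem_univ j)

theorem isCompact_setOf_isCoupling : IsCompact {Q | IsCoupling μ1 μ2 Q} := by
  have hclosed : IsClosed {Q | IsCoupling μ1 μ2 Q} := by
    simp only [IsCoupling, Set.ofPred_and, Set.ofPred_forall]
    refine .inter (isClosed_iInter fun i => isClosed_iInter fun j =>
      isClosed_le continuous_const (by fun_prop)) (.inter ?_ ?_)
    · exact isClosed_iInter fun i => isClosed_eq (by fun_prop) continuous_const
    · exact isClosed_iInter fun j => isClosed_eq (by fun_prop) continuous_const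
  exact isCompact_Icc.of_isClosed_subset hclosed fun Q hQ =>
    ⟨fun i j => hQ.1 i j, fun i j => hQ.le_marginal_left i j⟩

end Couplings

section Objective

variable {n m : ℕ} {ε : ℝ} {S : Fin n → Fin m → ℝ} {μ1 : Fin n → ℝ} {μ2 : Fin m → ℝ}

theorem entropicOTObjective_eq_sum (Q : Fin n → Fin m → ℝ) :
    entropicOTObjective ε S Q = ∑ i, ∑ j, (Q i j * S i j + ε * negMulLog (Q i j)) := by
  simp only [entropicOTObjective, sum_add_distrib, negMulLog, neg_mul, ← mul_sum, sum_neg_distrib]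

theorem continuous_entropicOTObjective :
    Continuous (entropicOTObjective (n := n) (m := m) ε S) := by
  unfold entropicOTObjective
  fun_prop

theorem strictConcaveOn_entropicOTObjective (hε : 0 < ε) :
    StrictConcaveOn ℝ (Set.Ici 0) (entropicOTObjective ε S) := by
  have h := StrictConcaveOn.pi_sum fun i =>
    StrictConcaveOn.pi_sum fun j => strictConcaveOn_mul_add_mul_negMulLog hε (S i j)
  simp only [Set.pi_univ_Ici] at h
  exact h.congr fun Q _ => (entropicOTObjective_eq_sum Q).symm

theorem IsCoupling.eq_of_isMaxOn (hε : 0 < ε)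
    {Q Q' : Fin n → Fin m → ℝ} (hQ : IsCoupling μ1 μ2 Q) (hQ' : IsCoupling μ1 μ2 Q')
    (hmax : IsMaxOn (entropicOTObjective ε S) {Q | IsCoupling μ1 μ2 Q} Q)
    (hmax' : IsMaxOn (entropicOTObjective ε S) {Q | IsCoupling μ1 μ2 Q} Q') : Q = Q' :=
  ((strictConcaveOn_entropicOTObjective hε).subset (fun _ hR => hR.1)
    convex_setOf_isCoupling).eq_of_isMaxOn hmax hmax' hQ hQ'

end Objective

section Positivity

variable {n m : ℕ} {ε : ℝ} {S : Fin n → Fin m → ℝ} {μ1 : Fin n → ℝ} {μ2 : Fin m → ℝ}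

theorem le_entropicOTObjective_convex_comb (hε : 0 < ε) {P Q : Fin n → Fin m → ℝ}
    (hP : P ∈ Set.Ici 0) (hQ : Q ∈ Set.Ici 0) {t : ℝ} (ht0 : 0 ≤ t) (ht1 : t ≤ 1)
    {i : Fin n} {j : Fin m} (hQij : Q i j = 0) :
    (1 - t) * entropicOTObjective ε S Q + t * entropicOTObjective ε S P
        + ε * P i j * negMulLog t
      ≤ entropicOTObjective ε S ((1 - t) • Q + t • P) := by
  set gap : Fin n → Fin m → ℝ := fun a b =>
    ((1 - t) * Q a b + t * P a b) * S a b + ε * negMulLog ((1 - t) * Q a b + t * P a b)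
      - ((1 - t) * (Q a b * S a b + ε * negMulLog (Q a b))
        + t * (P a b * S a b + ε * negMulLog (P a b))) with hgap
  have hgap_nonneg : ∀ a b, 0 ≤ gap a b := fun a b => sub_nonneg.2 <|
    (strictConcaveOn_mul_add_mul_negMulLog hε (S a b)).concaveOn.2 (hQ a b) (hP a b)
      (sub_nonneg.2 ht1) ht0 (sub_add_cancel 1 t)
  have hgap_ij : gap i j = ε * P i j * negMulLog t := by
    simp only [hgap, hQij, mul_zero, zero_add, negMulLog_zero, negMulLog_mul]
    ring
  have hsum : ∑ a, ∑ b, gap a b = entropicOTObjective ε S ((1 - t) • Q + t • P)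
      - ((1 - t) * entropicOTObjective ε S Q + t * entropicOTObjective ε S P) := by
    simp only [entropicOTObjective_eq_sum, hgap, Pi.add_apply, Pi.smul_apply, smul_eq_mul,
      sum_sub_distrib, sum_add_distrib, ← mul_sum]
  have hgap_le_sum : gap i j ≤ ∑ a, ∑ b, gap a b :=
    (single_le_sum (fun b _ => hgap_nonneg i b) (mem_univ j)).trans
      (single_le_sum (fun a _ => sum_nonneg fun b _ => hgap_nonneg a b) (mem_univ i))
  linarith

theorem IsCoupling.pos_of_isMaxOn (hε : 0 < ε) {P Q : Fin n → Fin m → ℝ}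
    (hQ : IsCoupling μ1 μ2 Q)
    (hmax : IsMaxOn (entropicOTObjective ε S) {Q | IsCoupling μ1 μ2 Q} Q)
    (hP : IsCoupling μ1 μ2 P) (hPpos : ∀ i j, 0 < P i j) (i : Fin n) (j : Fin m) :
    0 < Q i j := by
  refine (hQ.1 i j).lt_of_ne' fun hQij => ?_
  set c := (entropicOTObjective ε S P - entropicOTObjective ε S Q) / (ε * P i j)
  set t := exp (min 0 (c - 1))
  have ht0 : 0 < t := exp_pos _
  have ht1 : t ≤ 1 := exp_le_one_iff.2 (min_le_left _ _)
  have hlog : ε * P i j * log t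
      < entropicOTObjective ε S P - entropicOTObjective ε S Q := by
    rw [← lt_div_iff₀' (mul_pos hε (hPpos i j)), log_exp]
    linarith [min_le_right 0 (c - 1)]
  have hseg := le_entropicOTObjective_convex_comb (S := S) hε hP.1 hQ.1 ht0.le ht1 hQij
  have hle : entropicOTObjective ε S ((1 - t) • Q + t • P) ≤ entropicOTObjective ε S Q :=
    hmax (convex_setOf_isCoupling hQ hP (sub_nonneg.2 ht1) ht0.le (sub_add_cancel 1 t))
  rw [negMulLog] at hseg
  nlinarith [mul_lt_mul_of_pos_left hlog ht0]

end Positivity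

section Stationarity

open Filter Topology

variable {n m : ℕ} {ε : ℝ} {S : Fin n → Fin m → ℝ} {μ1 : Fin n → ℝ} {μ2 : Fin m → ℝ}
  {Q D : Fin n → Fin m → ℝ}

theorem IsCoupling.eventually_add_smul (hQ : IsCoupling μ1 μ2 Q) (hpos : ∀ i j, 0 < Q i j)
    (hrow : ∀ i, ∑ j, D i j = 0) (hcol : ∀ j, ∑ i, D i j = 0) :
    ∀ᶠ t in 𝓝 (0 : ℝ), IsCoupling μ1 μ2 (Q + t • D) := by
  have hnear : ∀ᶠ t in 𝓝 (0 : ℝ), ∀ i j, 0 < Q i j + t * D i j :=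
    eventually_all.2 fun i => eventually_all.2 fun j =>
      ((continuous_const.add (continuous_id.mul continuous_const)).tendsto' 0 (Q i j)
        (by simp)).eventually (lt_mem_nhds (hpos i j))
  filter_upwards [hnear] with t ht
  refine ⟨fun i j => (ht i j).le, fun i => ?_, fun j => ?_⟩
  · simp [sum_add_distrib, ← mul_sum, hrow, hQ.2.1 i]
  · simp [sum_add_distrib, ← mul_sum, hcol, hQ.2.2 j]

theorem hasDerivAt_entropicOTObjective_add_smul (hpos : ∀ i j, 0 < Q i j) :
    HasDerivAt (fun t : ℝ => entropicOTObjective ε S (Q + t • D))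
      (∑ i, ∑ j, D i j * (S i j - ε * (log (Q i j) + 1))) 0 := by
  simp only [entropicOTObjective_eq_sum, Pi.add_apply, Pi.smul_apply, smul_eq_mul]
  refine HasDerivAt.fun_sum fun i _ => HasDerivAt.fun_sum fun j _ => ?_
  have hline : HasDerivAt (fun t : ℝ => Q i j + t * D i j) (D i j) 0 :=
    (hasDerivAt_mul_const (D i j)).const_add (Q i j)
  have hnml : HasDerivAt negMulLog (-log (Q i j) - 1) (Q i j + 0 * D i j) := by
    simpa using hasDerivAt_negMulLog (hpos i j).ne'
  refine ((hline.mul_const (S i j)).fun_add ((hnml.comp 0 hline).const_mul ε)).congr_deriv ?_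
  ring

/-- The constant `-ε` in the gradient `S - ε (log Q + 1)` is orthogonal to directions with zero
row sums, so it is dropped. -/
theorem IsCoupling.sum_mul_gradient_eq_zero (hQ : IsCoupling μ1 μ2 Q) (hpos : ∀ i j, 0 < Q i j)
    (hmax : IsMaxOn (entropicOTObjective ε S) {Q | IsCoupling μ1 μ2 Q} Q)
    (hrow : ∀ i, ∑ j, D i j = 0) (hcol : ∀ j, ∑ i, D i j = 0) :
    ∑ i, ∑ j, D i j * (S i j - ε * log (Q i j)) = 0 := by
  have hloc : IsLocalMax (fun t : ℝ => entropicOTObjective ε S (Q + t • D)) 0 := by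
    filter_upwards [hQ.eventually_add_smul hpos hrow hcol] with t ht
    simpa using hmax ht
  have hderiv := hloc.hasDerivAt_eq_zero (hasDerivAt_entropicOTObjective_add_smul hpos)
  have hsplit : ∀ i j, D i j * (S i j - ε * (log (Q i j) + 1))
      = D i j * (S i j - ε * log (Q i j)) - D i j * ε := fun i j => by ring
  simpa only [hsplit, sum_sub_distrib, ← sum_mul, hrow, zero_mul, sum_const_zero, sub_zero]
    using hderiv

theorem IsCoupling.exists_gibbs_form_of_isMaxOn (hε : 0 < ε) (hQ : IsCoupling μ1 μ2 Q)
    (hpos : ∀ i j, 0 < Q i j)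
    (hmax : IsMaxOn (entropicOTObjective ε S) {Q | IsCoupling μ1 μ2 Q} Q)
    (I : Fin n) (J : Fin m) :
    ∃ (κ1 : Fin n → ℝ) (κ2 : Fin m → ℝ), (∀ i, 0 < κ1 i) ∧ (∀ j, 0 < κ2 j) ∧
      ∀ i j, Q i j = κ1 i * exp (S i j / ε) * κ2 j := by
  set G : Fin n → Fin m → ℝ := fun i j => S i j - ε * log (Q i j) with hG
  have hrect : ∀ i j, G i j + G I J = G i J + G I j := by
    intro i j
    have h := hQ.sum_mul_gradient_eq_zero hpos hmax
      (D := fun a b => (Pi.single i 1 - Pi.single I 1 : Fin n → ℝ) a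
        * (Pi.single j 1 - Pi.single J 1 : Fin m → ℝ) b)
      (fun a => by simp [← mul_sum]) (fun b => by simp [← sum_mul])
    simp only [mul_assoc, ← mul_sum, sum_single_sub_single_mul] at h
    simp only [hG]
    linarith
  refine ⟨fun i => exp ((G I J - G i J) / ε), fun j => exp (-G I j / ε),
    fun _ => exp_pos _, fun _ => exp_pos _, fun i j => ?_⟩
  rw [← exp_add, ← exp_add, ← exp_log (hpos i j)]
  congr 1
  field_simp
  linarith [hrect i j]

end Stationarity

/-- The entropic OT objective attains its maximum over the couplings of `μ1` and `μ2`
at a unique coupling `Q*`; this `Q*` has strictly positive entries, and it factors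
through the Gibbs kernel: `Q* i j = κ1 i * exp (S i j / ε) * κ2 j` for some strictly
positive vectors `κ1, κ2`. -/
theorem entropic_ot_unique_maximizer (n m : ℕ) (hn : 1 ≤ n) (hm : 1 ≤ m)
    (ε : ℝ) (hε : 0 < ε) (S : Fin n → Fin m → ℝ)
    (μ1 : Fin n → ℝ) (hμ1 : ∀ i, 0 < μ1 i) (hμ1sum : ∑ i, μ1 i = 1)
    (μ2 : Fin m → ℝ) (hμ2 : ∀ j, 0 < μ2 j) (hμ2sum : ∑ j, μ2 j = 1) :
    ∃ Q : Fin n → Fin m → ℝ,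
      IsCoupling μ1 μ2 Q ∧
      (∀ Q', IsCoupling μ1 μ2 Q' →
        entropicOTObjective ε S Q' ≤ entropicOTObjective ε S Q) ∧
      (∀ Q', IsCoupling μ1 μ2 Q' →
        entropicOTObjective ε S Q' = entropicOTObjective ε S Q → Q' = Q) ∧
      (∀ i j, 0 < Q i j) ∧
      ∃ (κ1 : Fin n → ℝ) (κ2 : Fin m → ℝ),
        (∀ i, 0 < κ1 i) ∧ (∀ j, 0 < κ2 j) ∧
        ∀ i j, Q i j = κ1 i * Real.exp (S i j / ε) * κ2 j := by
  have hprod := isCoupling_mul (fun i => (hμ1 i).le) hμ1sum (fun j => (hμ2 j).le) hμ2sum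
  obtain ⟨Q, hQ, hmax⟩ := isCompact_setOf_isCoupling.exists_isMaxOn ⟨_, hprod⟩
    (continuous_entropicOTObjective (ε := ε) (S := S)).continuousOn
  have hpos : ∀ i j, 0 < Q i j :=
    hQ.pos_of_isMaxOn hε hmax hprod fun i j => mul_pos (hμ1 i) (hμ2 j)
  refine ⟨Q, hQ, hmax, fun Q' hQ' hQQ' => ?_, hpos,
    hQ.exists_gibbs_form_of_isMaxOn hε hpos hmax ⟨0, hn⟩ ⟨0, hm⟩⟩
  exact hQ'.eq_of_isMaxOn hε hQ (fun R hR => hQQ' ▸ hmax hR) hmax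
end
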